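/- Let m = 2^α with α ≥ 3, and let A, B ⊆ ℤ/mℤ with A ∪ B = ℤ/mℤ and A ∩ B = {r₁, r₂}, r₁ ≠ r₂, where r₂ − r₁ is even and r₂ ≢ r₁ + m/2 (mod m). Then there exists n ∈ ℤ/mℤ with R_A(n) ≠ R_B(n). -/

import Mathlib

open Polynomial Finset

/-- Number of unordered pairs (a, a') from A (possibly equal) with a + a' = n. -/
def Rf {m : ℕ} (A : Finset (ZMod m)) (n : ZMod m) : ℕ :=
  ((A ×ˢ A).filter (fun p => p.1 + p.2 = n ∧ p.1.val ≤ p.2.val)).card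

/-- Number of ordered pairs (c, d) ∈ C × D with c + d = n. -/
def Rord {m : ℕ} (C D : Finset (ZMod m)) (n : ZMod m) : ℕ :=
  ((C ×ˢ D).filter (fun p => p.1 + p.2 = n)).card

/-- Characteristic function of A applied to the residue class of an integer. -/
def chi {m : ℕ} (A : Finset (ZMod m)) (k : ℤ) : ℤ :=
  if (k : ZMod m) ∈ A then 1 else 0

/-- strict version -/
def Rst {m : ℕ} (C : Finset (ZMod m)) (n : ZMod m) : ℕ :=
  ((C ×ˢ C).filter (fun p => p.1 + p.2 = n ∧ p.1.val < p.2.val)).card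

/-- diagonal count -/
def Dg {m : ℕ} (C : Finset (ZMod m)) (n : ZMod m) : ℕ :=
  (C.filter (fun c => c + c = n)).card

section NatLayer
variable {m : ℕ} [NeZero m]

lemma card_eq_filter {C : Finset (ZMod m)} {n : ZMod m} :
    ((C ×ˢ C).filter (fun p => p.1 + p.2 = n ∧ p.1 = p.2)).card = Dg C n := by
  classical
  apply Finset.card_bij (fun p _ => p.1)
  · rintro ⟨x, y⟩ hp
    simp only [mem_filter, mem_product] at hp
    obtain ⟨⟨hx, hy⟩, hs, he⟩ := hp
    subst he
    simp [Dg, Finset.mem_filter, hx, hs]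
  · rintro ⟨x, y⟩ hp ⟨x', y'⟩ hp' h
    simp only [mem_filter, mem_product] at hp hp'
    obtain ⟨_, _, he⟩ := hp; obtain ⟨_, _, he'⟩ := hp'
    simp only at h
    subst he; subst he'; subst h; rfl
  · intro c hc
    simp only [Dg, Finset.mem_filter] at hc
    exact ⟨(c, c), by simp [Finset.mem_filter, hc.1, hc.2], rfl⟩

lemma Rf_eq_Rst_add_Dg (C : Finset (ZMod m)) (n : ZMod m) :
    Rf C n = Rst C n + Dg C n := by
  classical
  have hsplit := Finset.card_filter_add_card_filter_not
    (s := (C ×ˢ C).filter (fun p => p.1 + p.2 = n ∧ p.1.val ≤ p.2.val))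
    (p := fun p => p.1.val < p.2.val)
  rw [Finset.filter_filter, Finset.filter_filter] at hsplit
  have h1 : ((C ×ˢ C).filter fun p => (p.1 + p.2 = n ∧ p.1.val ≤ p.2.val) ∧ p.1.val < p.2.val)
      = (C ×ˢ C).filter (fun p => p.1 + p.2 = n ∧ p.1.val < p.2.val) := by
    apply Finset.filter_congr; rintro p -
    constructor
    · rintro ⟨⟨h, _⟩, h2⟩; exact ⟨h, h2⟩
    · rintro ⟨h, h2⟩; exact ⟨⟨h, le_of_lt h2⟩, h2⟩
  have h2 : ((C ×ˢ C).filter fun p => (p.1 + p.2 = n ∧ p.1.val ≤ p.2.val) ∧ ¬ p.1.val < p.2.val)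
      = (C ×ˢ C).filter (fun p => p.1 + p.2 = n ∧ p.1 = p.2) := by
    apply Finset.filter_congr; rintro p -
    constructor
    · rintro ⟨⟨h, hle⟩, hnlt⟩
      exact ⟨h, ZMod.val_injective m (le_antisymm hle (not_lt.mp hnlt))⟩
    · rintro ⟨h, he⟩; exact ⟨⟨h, by rw [he]⟩, by rw [he]; exact lt_irrefl _⟩
  rw [h1, h2, card_eq_filter] at hsplit
  rw [Rf, ← hsplit, Rst]

lemma Rord_comm (C D : Finset (ZMod m)) (n : ZMod m) : Rord C D n = Rord D C n := by
  classical
  apply Finset.card_bij (fun p _ => p.swap)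
  · rintro ⟨x, y⟩ hp
    simp only [mem_filter, mem_product] at hp ⊢
    exact ⟨⟨hp.1.2, hp.1.1⟩, by rw [Prod.swap]; rw [add_comm]; exact hp.2⟩
  · rintro p _ p' _ h
    exact Prod.swap_injective h
  · rintro ⟨x, y⟩ hp
    refine ⟨(y, x), ?_, rfl⟩
    simp only [mem_filter, mem_product] at hp ⊢
    exact ⟨⟨hp.1.2, hp.1.1⟩, by rw [add_comm]; exact hp.2⟩

lemma Rord_self (C : Finset (ZMod m)) (n : ZMod m) :
    Rord C C n = 2 * Rst C n + Dg C n := by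
  classical
  set T := (C ×ˢ C).filter (fun p => p.1 + p.2 = n) with hT
  have hpt : ∀ p : ZMod m × ZMod m, (1:ℕ) =
      (if p.1.val < p.2.val then 1 else 0) + (if p.2.val < p.1.val then 1 else 0)
        + (if p.1 = p.2 then 1 else 0) := by
    intro p
    by_cases h : p.1 = p.2
    · simp [h]
    · have hv : p.1.val ≠ p.2.val := fun hv => h (ZMod.val_injective m hv)
      rcases hv.lt_or_gt with hlt | hlt
      · simp [hlt, not_lt.mpr hlt.le, h]
      · simp [hlt, not_lt.mpr hlt.le, h]
  have hcard : T.card = (T.filter (fun p => p.1.val < p.2.val)).card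
      + (T.filter (fun p => p.2.val < p.1.val)).card + (T.filter (fun p => p.1 = p.2)).card := by
    have h1 := Finset.card_filter (fun p : ZMod m × ZMod m => p.1.val < p.2.val) T
    have h2 := Finset.card_filter (fun p : ZMod m × ZMod m => p.2.val < p.1.val) T
    have h3 := Finset.card_filter (fun p : ZMod m × ZMod m => p.1 = p.2) T
    rw [h1, h2, h3, ← Finset.sum_add_distrib, ← Finset.sum_add_distrib,
      Finset.card_eq_sum_ones]
    exact Finset.sum_congr rfl (fun p _ => hpt p)
  have hlt : (T.filter (fun p => p.1.val < p.2.val)).card = Rst C n := by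
    rw [hT, Finset.filter_filter]; rfl
  have hgt : (T.filter (fun p => p.2.val < p.1.val)).card = Rst C n := by
    rw [hT, Finset.filter_filter, Rst]
    apply Finset.card_bij (fun p _ => p.swap)
    · rintro ⟨x, y⟩ hp
      simp only [Finset.mem_filter, Finset.mem_product] at hp ⊢
      obtain ⟨⟨hx, hy⟩, hs, hv⟩ := hp
      refine ⟨⟨hy, hx⟩, ?_, hv⟩
      rw [add_comm]; exact hs
    · rintro p _ p' _ h; exact Prod.swap_injective h
    · rintro ⟨x, y⟩ hp
      simp only [Finset.mem_filter, Finset.mem_product] at hp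
      obtain ⟨⟨hx, hy⟩, hs, hv⟩ := hp
      refine ⟨(y, x), ?_, rfl⟩
      simp only [Finset.mem_filter, Finset.mem_product]
      refine ⟨⟨hy, hx⟩, ?_, hv⟩
      rw [add_comm]; exact hs
  have heq : (T.filter (fun p => p.1 = p.2)).card = Dg C n := by
    rw [hT, Finset.filter_filter, card_eq_filter]
  rw [Rord, ← hT] at *
  omega

lemma Dg_add (A B : Finset (ZMod m)) (n : ZMod m) :
    Dg A n + Dg B n = Dg (A ∪ B) n + Dg (A ∩ B) n := by
  classical
  rw [Dg, Dg, Dg, Dg, Finset.filter_union, Finset.filter_inter_distrib]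
  exact (Finset.card_union_add_card_inter _ _).symm

lemma Rord_add_left (A B X : Finset (ZMod m)) (n : ZMod m) :
    Rord A X n + Rord B X n = Rord (A ∪ B) X n + Rord (A ∩ B) X n := by
  classical
  rw [Rord, Rord, Rord, Rord, Finset.union_product, Finset.inter_product,
    Finset.filter_union, Finset.filter_inter_distrib]
  exact (Finset.card_union_add_card_inter _ _).symm

lemma Rord_add_right (X A B : Finset (ZMod m)) (n : ZMod m) :
    Rord X A n + Rord X B n = Rord X (A ∪ B) n + Rord X (A ∩ B) n := by
  rw [Rord_comm X A, Rord_comm X B, Rord_comm X (A ∪ B), Rord_comm X (A ∩ B)]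
  exact Rord_add_left A B X n

lemma Rord_univ_univ (n : ZMod m) : Rord (univ : Finset (ZMod m)) univ n = m := by
  classical
  rw [Rord]
  rw [show ((univ ×ˢ univ : Finset (ZMod m × ZMod m)).filter (fun p => p.1 + p.2 = n))
      = (univ : Finset (ZMod m)).image (fun a => (a, n - a)) from ?_]
  · rw [Finset.card_image_of_injective _ (fun a b h => (Prod.mk.injEq _ _ _ _ ▸ h).1),
      Finset.card_univ, ZMod.card]
  · ext ⟨x, y⟩
    simp only [mem_filter, mem_product, mem_image, mem_univ, true_and]
    constructor
    · rintro hs; exact ⟨x, by rw [← hs]; ring_nf⟩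
    · rintro ⟨a, h⟩
      obtain ⟨h1, h2⟩ := Prod.mk.injEq .. ▸ h
      subst h1; rw [← h2]; ring

end NatLayer

section Part2
variable {m : ℕ} [NeZero m]

lemma val_id (y : ZMod m) : ((y.val : ℕ) : ZMod m) = y := by
  rw [ZMod.natCast_val, ZMod.cast_id]

lemma val_add_self_even (hm : 2 ∣ m) (k : ZMod m) : 2 ∣ (k + k).val := by
  rw [ZMod.val_add]
  rw [Nat.dvd_mod_iff hm]
  omega

lemma add_self_eq_zero_iff' (hm : 2 ∣ m) (y : ZMod m) :
    y + y = 0 ↔ y = 0 ∨ y = ((m / 2 : ℕ) : ZMod m) := by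
  constructor
  · intro h
    have hv : (y + y).val = 0 := by rw [h, ZMod.val_zero]
    rw [ZMod.val_add] at hv
    have hlt : y.val < m := ZMod.val_lt y
    have hdvd : m ∣ y.val + y.val := Nat.dvd_of_mod_eq_zero hv
    have hmpos : 0 < m := Nat.pos_of_ne_zero (NeZero.ne m)
    have : y.val = 0 ∨ y.val = m / 2 := by
      rcases hdvd with ⟨c, hc⟩
      have hc2 : c < 2 := by
        by_contra hcc
        push_neg at hcc
        have : m * 2 ≤ m * c := Nat.mul_le_mul_left m hcc
        omega
      interval_cases c <;> omega
    rcases this with h0 | hh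
    · left; rw [← val_id y, h0, Nat.cast_zero]
    · right; rw [← val_id y, hh]
  · rintro (rfl | rfl)
    · rw [add_zero]
    · rw [← Nat.cast_add]
      have : m / 2 + m / 2 = m := by omega
      rw [this, ZMod.natCast_self]

lemma half_ne_zero (hm : 2 ∣ m) (hm2 : 2 < m) : ((m / 2 : ℕ) : ZMod m) ≠ 0 := by
  intro h
  have := ZMod.val_cast_of_lt (a := m/2) (n := m) (by omega)
  rw [h, ZMod.val_zero] at this
  omega

lemma Dg_univ (hm : 2 ∣ m) (hm2 : 2 < m) (n : ZMod m) :
    Dg (univ : Finset (ZMod m)) n = if 2 ∣ n.val then 2 else 0 := by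
  classical
  by_cases h : 2 ∣ n.val
  · rw [if_pos h]
    set h2 : ZMod m := ((m / 2 : ℕ) : ZMod m) with hh2
    set k0 : ZMod m := ((n.val / 2 : ℕ) : ZMod m) with hk0
    have hk : k0 + k0 = n := by
      rw [hk0, ← Nat.cast_add]
      have : n.val / 2 + n.val / 2 = n.val := by omega
      rw [this, val_id]
    have hfe : (univ : Finset (ZMod m)).filter (fun c => c + c = n) = {k0, k0 + h2} := by
      ext x
      simp only [Finset.mem_filter, Finset.mem_univ, true_and, Finset.mem_insert,
        Finset.mem_singleton]
      constructor
      · intro hx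
        have hz : (x - k0) + (x - k0) = 0 := by
          rw [show (x - k0) + (x - k0) = (x + x) - (k0 + k0) by ring, hx, hk, sub_self]
        rcases (add_self_eq_zero_iff' hm _).1 hz with h0 | hh
        · left; exact sub_eq_zero.mp h0
        · right
          rw [← hh2] at hh
          exact sub_eq_iff_eq_add'.mp hh
      · rintro (rfl | rfl)
        · exact hk
        · calc k0 + h2 + (k0 + h2) = (k0 + k0) + (h2 + h2) := by ring
          _ = n := by
            rw [(add_self_eq_zero_iff' hm h2).2 (Or.inr hh2), add_zero, hk]
    rw [Dg, hfe, Finset.card_pair]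
    intro he
    exact half_ne_zero hm hm2 (left_eq_add.mp he)
  · rw [if_neg h, Dg, Finset.card_eq_zero, Finset.filter_eq_empty_iff]
    intro x _
    intro hx
    exact h (hx ▸ val_add_self_even hm x)

lemma Dg_pair (x y : ZMod m) (hxy : x ≠ y) (n : ZMod m) :
    Dg ({x, y} : Finset (ZMod m)) n
      = (if x + x = n then 1 else 0) + (if y + y = n then 1 else 0) := by
  classical
  rw [Dg, Finset.card_filter, Finset.sum_pair hxy]

lemma Rst_pair (x y : ZMod m) (hxy : x ≠ y) (n : ZMod m) :
    Rst ({x, y} : Finset (ZMod m)) n = if x + y = n then 1 else 0 := by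
  classical
  have hv : x.val ≠ y.val := fun h => hxy (ZMod.val_injective m h)
  rw [Rst, Finset.card_filter, Finset.sum_product, Finset.sum_pair hxy]
  rw [Finset.sum_pair hxy, Finset.sum_pair hxy]
  rcases hv.lt_or_gt with h | h
  · have h' : ¬ y.val < x.val := lt_asymm h
    simp [lt_irrefl, h, h']
  · have h' : ¬ x.val < y.val := lt_asymm h
    simp [lt_irrefl, h, h', add_comm y x]

end Part2

abbrev QR (m : ℕ) : Type :=
  Polynomial (ZMod 2) ⧸ (Ideal.span {(X : Polynomial (ZMod 2))^m - 1})

noncomputable abbrev qmk (m : ℕ) : Polynomial (ZMod 2) →+* QR m := Ideal.Quotient.mk _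

noncomputable def xi (m : ℕ) : QR m := qmk m X

noncomputable def eps {m : ℕ} (n : ZMod m) : QR m := xi m ^ n.val

noncomputable def SwS {m : ℕ} [NeZero m] (w : ZMod m → ℕ) : QR m :=
  ∑ n : ZMod m, (w n : QR m) * eps n

noncomputable def FS {m : ℕ} [NeZero m] (C : Finset (ZMod m)) : QR m := ∑ c ∈ C, eps c

section Part3
variable {m : ℕ} [NeZero m]

lemma poly_two_zero : (2 : Polynomial (ZMod 2)) = 0 := by
  have := CharP.cast_eq_zero (Polynomial (ZMod 2)) 2
  exact_mod_cast this

lemma QR_two_zero : (2 : QR m) = 0 := by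
  have h : ((2:ℕ) : QR m) = qmk m ((2:ℕ) : Polynomial (ZMod 2)) := (map_natCast (qmk m) 2).symm
  have h2 : ((2:ℕ) : Polynomial (ZMod 2)) = 0 := by exact_mod_cast poly_two_zero
  rw [h2, map_zero] at h
  exact_mod_cast h

lemma QR_add_self (x : QR m) : x + x = 0 := by
  calc x + x = 2 * x := by ring
  _ = 0 := by rw [QR_two_zero, zero_mul]

lemma QR_char2_eq {x y : QR m} (h : x = y) : x + y = 0 := by rw [h]; exact QR_add_self y

lemma QR_eq_of_add_eq_zero {x y : QR m} (h : x + y = 0) : x = y := by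
  have := congrArg (· + y) h
  simp only [zero_add] at this
  rw [← this, add_assoc, QR_add_self, add_zero]

lemma xi_pow_m : xi m ^ m = 1 := by
  rw [xi, ← map_pow, show (1 : QR m) = qmk m 1 from (map_one _).symm]
  rw [Ideal.Quotient.mk_eq_mk_iff_sub_mem]
  exact Ideal.subset_span rfl

lemma xi_pow_mod (j : ℕ) : xi m ^ (j % m) = xi m ^ j := by
  conv_rhs => rw [← Nat.mod_add_div j m]
  rw [pow_add, pow_mul, xi_pow_m, one_pow, mul_one]

lemma eps_add (a b : ZMod m) : eps (a + b) = eps a * eps b := by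
  rw [eps, eps, eps, ← pow_add, ZMod.val_add, xi_pow_mod]

lemma eps_zero : eps (0 : ZMod m) = 1 := by rw [eps, ZMod.val_zero, pow_zero]

lemma eps_mul_neg (a : ZMod m) : eps a * eps (-a) = 1 := by
  rw [← eps_add, add_neg_cancel, eps_zero]

lemma SwS_add (w1 w2 : ZMod m → ℕ) :
    SwS (fun n => w1 n + w2 n) = SwS w1 + SwS w2 := by
  rw [SwS, SwS, SwS, ← Finset.sum_add_distrib]
  apply Finset.sum_congr rfl
  intro n _
  push_cast
  ring

lemma SwS_congr {w1 w2 : ZMod m → ℕ} (h : ∀ n, w1 n = w2 n) : SwS w1 = SwS w2 := by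
  rw [SwS, SwS]
  exact Finset.sum_congr rfl (fun n _ => by rw [h n])

lemma SwS_two (w : ZMod m → ℕ) : SwS (fun n => 2 * w n) = 0 := by
  rw [SwS]
  apply Finset.sum_eq_zero
  intro n _
  push_cast
  rw [QR_two_zero]
  ring

lemma FS_mul (C D : Finset (ZMod m)) : FS C * FS D = SwS (fun n => Rord C D n) := by
  rw [FS, FS, Finset.sum_mul_sum]
  have h1 : ∑ i ∈ C, ∑ j ∈ D, eps i * eps j = ∑ p ∈ C ×ˢ D, eps (p.1 + p.2) := by
    rw [Finset.sum_product]
    exact Finset.sum_congr rfl (fun i _ => Finset.sum_congr rfl (fun j _ => (eps_add i j).symm))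
  rw [h1, ← Finset.sum_fiberwise_of_maps_to (g := fun p : ZMod m × ZMod m => p.1 + p.2)
    (fun x _ => Finset.mem_univ _) (fun p => eps (p.1 + p.2))]
  rw [SwS]
  apply Finset.sum_congr rfl
  intro y _
  have : ∀ p ∈ (C ×ˢ D).filter (fun p : ZMod m × ZMod m => p.1 + p.2 = y),
      eps (p.1 + p.2) = eps y := by
    intro p hp
    rw [(Finset.mem_filter.mp hp).2]
  rw [Finset.sum_congr rfl this, Finset.sum_const, Rord, nsmul_eq_mul]

lemma FS_univ_mul_eps (t : ZMod m) : FS (univ : Finset (ZMod m)) * eps t = FS univ := by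
  rw [FS, Finset.sum_mul]
  have h1 : ∀ n : ZMod m, eps n * eps t = eps (n + t) := fun n => (eps_add n t).symm
  rw [Finset.sum_congr rfl (fun n _ => h1 n)]
  exact Fintype.sum_equiv (Equiv.addRight t) _ _ (fun n => rfl)

lemma sum_univ_zmod {β : Type*} [AddCommMonoid β] (f : ZMod m → β) :
    ∑ n : ZMod m, f n = ∑ j ∈ Finset.range m, f (j : ZMod m) := by
  refine Finset.sum_nbij' (fun n => n.val) (fun k => (k : ZMod m)) ?_ ?_ ?_ ?_ ?_
  · intro a _
    exact Finset.mem_range.mpr (ZMod.val_lt a)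
  · intro a _
    exact Finset.mem_univ _
  · intro a _
    show ((a.val : ℕ) : ZMod m) = a
    rw [ZMod.natCast_val, ZMod.cast_id]
  · intro a ha
    exact ZMod.val_cast_of_lt (Finset.mem_range.mp ha)
  · intro a _
    show f a = f ((a.val : ℕ) : ZMod m)
    rw [ZMod.natCast_val, ZMod.cast_id]

noncomputable def evh (m : ℕ) : QR m →+* ZMod 2 :=
  Ideal.Quotient.lift _ (Polynomial.evalRingHom (1 : ZMod 2)) (by
    intro a ha
    rw [Ideal.mem_span_singleton] at ha
    obtain ⟨c, rfl⟩ := ha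
    simp)

lemma evh_qmk (f : Polynomial (ZMod 2)) : evh m (qmk m f) = f.eval 1 := rfl

lemma evh_eps (n : ZMod m) : evh m (eps n) = 1 := by
  rw [eps, xi, map_pow, evh_qmk]
  simp

lemma evh_FS (C : Finset (ZMod m)) : evh m (FS C) = (C.card : ZMod 2) := by
  rw [FS, map_sum]
  rw [Finset.sum_congr rfl (fun c _ => evh_eps c), Finset.sum_const, nsmul_eq_mul, mul_one]

end Part3

section Part4

lemma coeff_sq (f : Polynomial (ZMod 2)) (n : ℕ) : (f * f).coeff (2 * n) = f.coeff n := by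
  have h := Polynomial.map_frobenius_expand 2 f
  rw [ZMod.frobenius_zmod 2, Polynomial.map_id] at h
  rw [← sq, ← h, Polynomial.coeff_expand (by norm_num)]
  simp

lemma coeff_mul_of_dvd {P R : Polynomial (ZMod 2)} {a b : ℕ}
    (hP : (X : Polynomial (ZMod 2))^a ∣ P) (hR : (X : Polynomial (ZMod 2))^b ∣ R) :
    (P * R).coeff (a + b) = P.coeff a * R.coeff b := by
  obtain ⟨P', rfl⟩ := hP
  obtain ⟨R', rfl⟩ := hR
  have h : (X : Polynomial (ZMod 2))^a * P' * (X^b * R') = X^(a+b) * (P' * R') := by ring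
  rw [h]
  have h1 : ((X : Polynomial (ZMod 2))^(a+b) * (P' * R')).coeff (a + b) = (P' * R').coeff 0 := by
    simpa using Polynomial.coeff_X_pow_mul (P' * R') (a + b) 0
  have h2 : ((X : Polynomial (ZMod 2))^a * P').coeff a = P'.coeff 0 := by
    simpa using Polynomial.coeff_X_pow_mul P' a 0
  have h3 : ((X : Polynomial (ZMod 2))^b * R').coeff b = R'.coeff 0 := by
    simpa using Polynomial.coeff_X_pow_mul R' b 0
  rw [h1, h2, h3, Polynomial.mul_coeff_zero]

lemma endgame (m t : ℕ) (S U : Polynomial (ZMod 2)) (hU : U.coeff 0 = 1)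
    (h2t : 2 * t < m - 2)
    (hdvd : (X : Polynomial (ZMod 2))^m ∣
      S * S + (X^t * U) * S + (X^t * U) * (X^t * U) + X^(m-2) + X^(m-1)) : False := by
  set Q : Polynomial (ZMod 2) := X^t * U with hQ
  have hQd : (X : Polynomial (ZMod 2))^t ∣ Q := dvd_mul_right _ _
  have hQt : Q.coeff t = 1 := by
    rw [hQ, show ((X : Polynomial (ZMod 2))^t * U).coeff t = U.coeff 0 from
      by simpa using Polynomial.coeff_X_pow_mul U t 0, hU]
  have hcf : ∀ j < m, (S * S + Q * S + Q * Q + X^(m-2) + X^(m-1)).coeff j = 0 :=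
    Polynomial.X_pow_dvd_iff.mp hdvd
  have hXm2 : ∀ j, j < m - 2 → ((X : Polynomial (ZMod 2))^(m-2)).coeff j = 0 := by
    intro j hj
    rw [Polynomial.coeff_X_pow]
    simp [Nat.ne_of_lt hj]
  have hXm1 : ∀ j, j < m - 2 → ((X : Polynomial (ZMod 2))^(m-1)).coeff j = 0 := by
    intro j hj
    rw [Polynomial.coeff_X_pow]
    have : j ≠ m - 1 := by omega
    simp [this]
  by_cases hS : (X : Polynomial (ZMod 2))^t ∣ S
  · have hj := hcf (2*t) (by omega)
    rw [Polynomial.coeff_add, Polynomial.coeff_add, Polynomial.coeff_add,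
      Polynomial.coeff_add] at hj
    rw [coeff_sq, coeff_sq, show (Q*S).coeff (2*t) = Q.coeff t * S.coeff t from
      by rw [two_mul]; exact coeff_mul_of_dvd hQd hS, hQt,
      hXm2 _ h2t, hXm1 _ h2t] at hj
    revert hj
    generalize S.coeff t = c
    revert c
    decide
  · have hex : ∃ d, S.coeff d ≠ 0 ∧ d < t := by
      by_contra hcon
      push_neg at hcon
      exact hS (Polynomial.X_pow_dvd_iff.mpr (fun d hd => by
        by_contra hne
        exact absurd (hcon d hne) (not_le.mpr hd)))
    have hex' : ∃ d, S.coeff d ≠ 0 := ⟨hex.choose, hex.choose_spec.1⟩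
    set k := Nat.find hex' with hk
    have hks : S.coeff k ≠ 0 := Nat.find_spec hex'
    have hkt : k < t := lt_of_le_of_lt (Nat.find_min' hex' hex.choose_spec.1) hex.choose_spec.2
    have hSk : (X : Polynomial (ZMod 2))^k ∣ S := by
      apply Polynomial.X_pow_dvd_iff.mpr
      intro d hd
      by_contra hne
      exact absurd (Nat.find_min' hex' hne) (not_le.mpr hd)
    have hj := hcf (2*k) (by omega)
    rw [Polynomial.coeff_add, Polynomial.coeff_add, Polynomial.coeff_add,
      Polynomial.coeff_add] at hj
    have hQS : (Q * S).coeff (2*k) = 0 := by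
      have hdv : (X : Polynomial (ZMod 2))^(t+k) ∣ Q * S := by
        rw [pow_add]; exact mul_dvd_mul hQd hSk
      exact Polynomial.X_pow_dvd_iff.mp hdv _ (by omega)
    have hQQ : (Q * Q).coeff (2*k) = 0 := by
      have hdv : (X : Polynomial (ZMod 2))^(t+t) ∣ Q * Q := by
        rw [pow_add]; exact mul_dvd_mul hQd hQd
      exact Polynomial.X_pow_dvd_iff.mp hdv _ (by omega)
    rw [coeff_sq, hQS, hQQ, hXm2 _ (by omega), hXm1 _ (by omega)] at hj
    simp only [add_zero] at hj
    exact hks hj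

end Part4
section Part5

open Polynomial Finset

-- factorization of (X^t+1)^e - 1
lemma Tfact (t : ℕ) (ht : t ≠ 0) (e : ℕ) :
    ∃ U : Polynomial (ZMod 2), ((X : Polynomial (ZMod 2))^t + 1)^e = X^t * U + 1
      ∧ U.coeff 0 = (e : ZMod 2) := by
  induction e with
  | zero => exact ⟨0, by simp⟩
  | succ e ih =>
    obtain ⟨U, hU, hU0⟩ := ih
    refine ⟨U * (X^t + 1) + 1, ?_, ?_⟩
    · rw [pow_succ, hU]; ring
    · rw [Polynomial.coeff_add, Polynomial.coeff_one, Polynomial.mul_coeff_zero, hU0,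
        Polynomial.coeff_add, Polynomial.coeff_X_pow, Polynomial.coeff_one]
      simp only [ht, if_false, if_pos rfl, if_true,
        if_neg (show ¬(0:ℕ) = t from fun h => ht h.symm)]
      push_cast
      ring

lemma pow2_add (k : ℕ) (f g : Polynomial (ZMod 2)) :
    (f + g)^(2^k) = f^(2^k) + g^(2^k) := add_pow_char_pow f g 2 k

lemma poly_neg_one : (-1 : Polynomial (ZMod 2)) = 1 := by
  rw [neg_eq_iff_add_eq_zero, one_add_one_eq_two, poly_two_zero]

end Part5
section Part5b

open Polynomial Finset

noncomputable def W2q (m : ℕ) : QR m := ∑ i ∈ Finset.range (m/2), xi m ^ (2*i)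

noncomputable def W2poly (m : ℕ) : Polynomial (ZMod 2) := ∑ j ∈ Finset.range (m/2), X^(2*j)

noncomputable def Zpoly (m : ℕ) : Polynomial (ZMod 2) := ∑ j ∈ Finset.range m, X^j

variable {m : ℕ} [NeZero m]

lemma qmk_W2poly : qmk m (W2poly m) = W2q m := by
  rw [W2poly, W2q, map_sum]
  exact Finset.sum_congr rfl (fun i _ => by rw [map_pow]; rfl)

lemma qmk_Zpoly : qmk m (Zpoly m) = FS (univ : Finset (ZMod m)) := by
  rw [Zpoly, FS, map_sum, sum_univ_zmod (f := fun n : ZMod m => eps n)]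
  refine Finset.sum_congr rfl (fun j hj => ?_)
  rw [map_pow, eps, ZMod.val_cast_of_lt (Finset.mem_range.mp hj)]
  rfl

lemma W2q_mul_xi2 (hm2 : 2 ∣ m) : W2q m * xi m ^ 2 = W2q m := by
  rw [W2q, Finset.sum_mul]
  have h1 : ∀ i : ℕ, xi m ^ (2*i) * xi m ^ 2 = xi m ^ (2*(i+1)) := by
    intro i
    rw [← pow_add]
    ring
  rw [Finset.sum_congr rfl (fun i _ => h1 i)]
  have e1 := Finset.sum_range_succ' (fun i => xi m ^ (2*i)) (m/2)
  have e2 := Finset.sum_range_succ (fun i => xi m ^ (2*i)) (m/2)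
  have hNf : xi m ^ (2*(m/2)) = xi m ^ (2*0) := by
    rw [show 2*(m/2) = m by omega, xi_pow_m]
    norm_num
  linear_combination e2 - e1 + hNf

lemma W2q_mul_xi2_pow (hm2 : 2 ∣ m) (k : ℕ) : W2q m * (xi m ^ 2) ^ k = W2q m := by
  induction k with
  | zero => rw [pow_zero, mul_one]
  | succ k ih =>
    rw [pow_succ, ← mul_assoc]
    calc W2q m * (xi m ^ 2) ^ k * xi m ^ 2 = W2q m * xi m ^ 2 := by rw [ih]
    _ = W2q m := W2q_mul_xi2 hm2

lemma W2q_shift (hm2 : 2 ∣ m) (c : ZMod m) (hc : 2 ∣ c.val) : W2q m * eps c = W2q m := by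
  obtain ⟨k, hk⟩ := hc
  rw [eps, hk, pow_mul]
  exact W2q_mul_xi2_pow hm2 k

lemma evh_xi : evh m (xi m) = 1 := by
  rw [xi, evh_qmk]
  simp

lemma evh_W2q : evh m (W2q m) = ((m/2 : ℕ) : ZMod 2) := by
  rw [W2q, map_sum]
  rw [Finset.sum_congr rfl (fun i _ => by rw [map_pow, evh_xi, one_pow])]
  rw [Finset.sum_const, nsmul_eq_mul, mul_one, Finset.card_range]

lemma geom_W2poly (hm2 : 2 ∣ m) :
    W2poly m * ((X : Polynomial (ZMod 2))^2 - 1) = X^m - 1 := by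
  rw [W2poly]
  have h1 : ∀ j : ℕ, (X : Polynomial (ZMod 2))^(2*j) = (X^2)^j := by
    intro j
    rw [← pow_mul]
  rw [Finset.sum_congr rfl (fun j _ => h1 j), geom_sum_mul, ← pow_mul,
    show 2*(m/2) = m by omega]

lemma geom_Zpoly : Zpoly m * ((X : Polynomial (ZMod 2)) - 1) = X^m - 1 := by
  rw [Zpoly]
  exact geom_sum_mul X m

end Part5b
open Polynomial Finset in
set_option maxHeartbeats 2000000 in
theorem stmt12 (α : ℕ) (hα : 3 ≤ α) (m : ℕ) (hm : m = 2 ^ α) [NeZero m]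
    (A B : Finset (ZMod m)) (hU : A ∪ B = Finset.univ) (r₁ r₂ : ℤ)
    (hne : (r₁ : ZMod m) ≠ (r₂ : ZMod m))
    (hI : A ∩ B = {(r₁ : ZMod m), (r₂ : ZMod m)})
    (heven : Even (r₂ - r₁))
    (hhalf : (r₂ : ZMod m) ≠ (r₁ : ZMod m) + ((m / 2 : ℕ) : ZMod m)) :
    ∃ n : ZMod m, Rf A n ≠ Rf B n := by
  by_contra hcon
  push_neg at hcon
  -- basic facts about m
  have h8 : (8:ℕ) ∣ m := by
    rw [hm, show (8:ℕ) = 2^3 by norm_num]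
    exact pow_dvd_pow 2 hα
  have hm2 : 2 ∣ m := by omega
  have hm4 : 4 ∣ m := by omega
  have hmgt : 2 < m := by
    have : m ≠ 0 := NeZero.ne m
    omega
  have hm8 : 8 ≤ m := by
    have : m ≠ 0 := NeZero.ne m
    omega
  set ρ1 : ZMod m := (r₁ : ZMod m) with hρ1
  set ρ2 : ZMod m := (r₂ : ZMod m) with hρ2
  set I : Finset (ZMod m) := {ρ1, ρ2} with hIdef
  -- ℕ-level identities
  have hH : ∀ n, Rst A n + Dg A n = Rst B n + Dg B n := by
    intro n
    have h1 := Rf_eq_Rst_add_Dg A n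
    have h2 := Rf_eq_Rst_add_Dg B n
    have h3 := hcon n
    omega
  have hG : ∀ n, Rst A n + Rst B n + Rord A B n
      = Rst univ n + Rord univ I n + Rst I n := by
    intro n
    have e1 := Rord_add_left A B A n
    rw [hU, hI] at e1
    have e2 := Rord_add_left A B B n
    rw [hU, hI] at e2
    have e3 := Rord_add_right univ A B n
    rw [hU, hI] at e3
    have e4 := Rord_add_right I A B n
    rw [hU, hI] at e4
    have sA := Rord_self A n
    have sB := Rord_self B n
    have su := Rord_self (univ : Finset (ZMod m)) n
    have sI := Rord_self I n
    have cAB := Rord_comm A B n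
    have cBA := Rord_comm B A n
    have cuI := Rord_comm (univ : Finset (ZMod m)) I n
    have dadd := Dg_add A B n
    rw [hU, hI] at dadd
    omega
  -- QR-level
  have hA2 : FS A * FS A = SwS (fun n => Dg A n) := by
    rw [FS_mul]
    calc SwS (fun n => Rord A A n) = SwS (fun n => 2 * Rst A n + Dg A n) :=
          SwS_congr (fun n => Rord_self A n)
    _ = SwS (fun n => 2 * Rst A n) + SwS (fun n => Dg A n) := SwS_add _ _
    _ = SwS (fun n => Dg A n) := by rw [SwS_two, zero_add]
  have hB2 : FS B * FS B = SwS (fun n => Dg B n) := by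
    rw [FS_mul]
    calc SwS (fun n => Rord B B n) = SwS (fun n => 2 * Rst B n + Dg B n) :=
          SwS_congr (fun n => Rord_self B n)
    _ = SwS (fun n => 2 * Rst B n) + SwS (fun n => Dg B n) := SwS_add _ _
    _ = SwS (fun n => Dg B n) := by rw [SwS_two, zero_add]
  have hH2 : SwS (fun n => Rst A n) + SwS (fun n => Dg A n)
      = SwS (fun n => Rst B n) + SwS (fun n => Dg B n) := by
    rw [← SwS_add, ← SwS_add]
    exact SwS_congr hH
  have hG2 : SwS (fun n => Rst A n) + SwS (fun n => Rst B n) + SwS (fun n => Rord A B n)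
      = SwS (fun n => Rst univ n) + SwS (fun n => Rord univ I n) + SwS (fun n => Rst I n) := by
    rw [← SwS_add, ← SwS_add, ← SwS_add, ← SwS_add]
    exact SwS_congr hG
  have hABQ : FS A * FS B = SwS (fun n => Rord A B n) := FS_mul A B
  have hUI : SwS (fun n => Rord univ I n) = 0 := by
    rw [← FS_mul]
    have hFI : FS I = eps ρ1 + eps ρ2 := Finset.sum_pair hne
    rw [hFI, mul_add, FS_univ_mul_eps, FS_univ_mul_eps]
    exact QR_add_self _
  have hsI : SwS (fun n => Rst I n) = eps (ρ1 + ρ2) := by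
    rw [SwS_congr (fun n => Rst_pair ρ1 ρ2 hne n)]
    rw [SwS]
    calc ∑ n : ZMod m, ((if ρ1 + ρ2 = n then 1 else 0 : ℕ) : QR m) * eps n
        = ∑ n : ZMod m, (if ρ1 + ρ2 = n then eps n else 0) := by
          refine Finset.sum_congr rfl (fun n _ => ?_)
          by_cases h : ρ1 + ρ2 = n <;> simp [h]
    _ = eps (ρ1 + ρ2) := by rw [Finset.sum_ite_eq]; simp
  -- SwS (Rst univ) = W2q
  have hRsu : ∀ n : ZMod m, ((Rst univ n : ℕ) : QR m)
      = if 2 ∣ n.val then 1 else 0 := by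
    intro n
    have h1 := Rord_self (univ : Finset (ZMod m)) n
    rw [Rord_univ_univ] at h1
    have h2 := Dg_univ hm2 hmgt n
    by_cases hp : 2 ∣ n.val
    · rw [if_pos hp]
      rw [if_pos hp] at h2
      obtain ⟨k, hk⟩ : ∃ k, Rst univ n = 2*k + 1 := ⟨(Rst univ n)/2, by omega⟩
      rw [hk]
      push_cast
      rw [QR_two_zero]
      ring
    · rw [if_neg hp]
      rw [if_neg hp] at h2
      obtain ⟨k, hk⟩ : ∃ k, Rst univ n = 2*k := ⟨(Rst univ n)/2, by omega⟩
      rw [hk]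
      push_cast
      rw [QR_two_zero]
      ring
  have hUu : SwS (fun n => Rst univ n) = W2q m := by
    rw [SwS]
    calc ∑ n : ZMod m, ((Rst univ n : ℕ) : QR m) * eps n
        = ∑ n : ZMod m, (if 2 ∣ n.val then 1 else 0 : QR m) * eps n :=
          Finset.sum_congr rfl (fun n _ => by rw [hRsu n])
    _ = ∑ j ∈ range m, (if 2 ∣ j then 1 else 0 : QR m) * xi m ^ j := by
        rw [sum_univ_zmod (f := fun n : ZMod m => (if 2 ∣ n.val then 1 else 0 : QR m) * eps n)]
        refine Finset.sum_congr rfl (fun j hj => ?_)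
        rw [eps, ZMod.val_cast_of_lt (Finset.mem_range.mp hj)]
    _ = ∑ j ∈ (range m).filter (fun j => 2 ∣ j), xi m ^ j := by
        rw [Finset.sum_filter]
        refine Finset.sum_congr rfl (fun j _ => ?_)
        by_cases h : 2 ∣ j <;> simp [h]
    _ = ∑ i ∈ range (m/2), xi m ^ (2*i) := by
        refine Finset.sum_nbij' (fun j => j/2) (fun i => 2*i) ?_ ?_ ?_ ?_ ?_
        · intro j hj
          simp only [Finset.mem_filter, Finset.mem_range] at hj
          exact Finset.mem_range.mpr (by omega)
        · intro i hi
          have := Finset.mem_range.mp hi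
          simp only [Finset.mem_filter, Finset.mem_range]
          omega
        · intro j hj
          simp only [Finset.mem_filter, Finset.mem_range] at hj
          omega
        · intro i _
          omega
        · intro j hj
          simp only [Finset.mem_filter, Finset.mem_range] at hj
          congr 1
          omega
    _ = W2q m := rfl
  -- union/inter identity
  have hE : FS A + FS B = FS (univ : Finset (ZMod m)) + (eps ρ1 + eps ρ2) := by
    have h := Finset.sum_union_inter (s₁ := A) (s₂ := B) (f := fun c => eps c)
    rw [hU, hI] at h
    rw [Finset.sum_pair hne] at h
    exact h.symm
  have hmQR : ((m : ℕ) : QR m) = 0 := by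
    rw [hm]
    push_cast
    rw [QR_two_zero]
    exact zero_pow (by omega)
  have hZZ : FS (univ : Finset (ZMod m)) * FS univ = 0 := by
    rw [FS_mul, SwS_congr (fun n => Rord_univ_univ n), SwS]
    apply Finset.sum_eq_zero
    intro n _
    rw [hmQR, zero_mul]
  have haZ0 : FS A * FS univ = ((A.card : ℕ) : QR m) * FS univ := by
    rw [FS, Finset.sum_mul,
      Finset.sum_congr rfl (fun c (_ : c ∈ A) => by rw [mul_comm (eps c), FS_univ_mul_eps]),
      Finset.sum_const, nsmul_eq_mul]
  -- char-2 algebra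
  have s1 : SwS (fun n => Rst A n) + SwS (fun n => Rst B n) = FS A * FS A + FS B * FS B := by
    linear_combination hH2 - hA2 - hB2 + QR_add_self (SwS (fun n => Rst B n))
      - QR_add_self (SwS (fun n => Dg A n))
  have s2 : SwS (fun n => Rst A n) + SwS (fun n => Rst B n) + FS A * FS B
      = SwS (fun n => Rst univ n) + eps (ρ1 + ρ2) := by
    linear_combination hG2 + hABQ + hUI + hsI
  have s3 : FS A * FS A + FS B * FS B + FS A * FS B
      = SwS (fun n => Rst univ n) + eps (ρ1 + ρ2) := by
    linear_combination s2 - s1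
  have s4 : FS B = FS A + (FS (univ : Finset (ZMod m)) + (eps ρ1 + eps ρ2)) := by
    linear_combination hE - QR_add_self (FS A)
  rw [s4] at s3
  have C1 : FS A * FS A + FS A * eps ρ1 + FS A * eps ρ2 + ((A.card : ℕ) : QR m) * FS univ
      + eps ρ1 * eps ρ1 + eps ρ2 * eps ρ2 + eps ρ1 * eps ρ2
      = SwS (fun n => Rst univ n) := by
    linear_combination s3 - haZ0 - hZZ + eps_add ρ1 ρ2
      - (FS A * FS A + FS A * eps ρ1 + FS A * eps ρ2 + FS A * FS univ
          + FS univ * eps ρ1 + FS univ * eps ρ2) * QR_two_zero (m := m)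
  rw [hUu] at C1
  -- evaluation at 1 : |A| is odd
  have hW2ev : evh m (W2q m) = 0 := by
    rw [evh_W2q]
    obtain ⟨k, hk⟩ : 2 ∣ m/2 := by omega
    rw [hk]
    push_cast
    rw [show (2 : ZMod 2) = 0 by decide]
    ring
  have hZev : evh m (FS (univ : Finset (ZMod m))) = 0 := by
    rw [evh_FS, Finset.card_univ, ZMod.card]
    obtain ⟨k, hk⟩ := hm2
    rw [hk]
    push_cast
    rw [show (2 : ZMod 2) = 0 by decide]
    ring
  have hcard : ((A.card : ℕ) : ZMod 2) = 1 := by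
    have hev := congrArg (evh m) C1
    simp only [map_add, map_mul, map_natCast, evh_eps, evh_FS, hW2ev] at hev
    rw [Finset.card_univ, ZMod.card] at hev
    have hmz : ((m : ℕ) : ZMod 2) = 0 := by
      obtain ⟨k, hk⟩ := hm2
      rw [hk]
      push_cast
      rw [show (2 : ZMod 2) = 0 by decide]
      ring
    rw [hmz] at hev
    revert hev
    generalize ((A.card : ℕ) : ZMod 2) = x
    revert x
    decide
  have hc1 : ((A.card : ℕ) : QR m) = 1 := by
    have ho : A.card % 2 = 1 := by
      rcases Nat.even_or_odd A.card with he | ho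
      · exfalso
        obtain ⟨k, hk⟩ := he
        rw [hk] at hcard
        have h0 : ((k + k : ℕ) : ZMod 2) = 0 := by
          push_cast
          exact CharTwo.add_self_eq_zero _
        rw [h0] at hcard
        exact absurd hcard (by decide)
      · exact Nat.odd_iff.mp ho
    rw [show A.card = 2*(A.card/2) + 1 by omega]
    push_cast
    rw [QR_two_zero]
    ring
  rw [hc1, one_mul] at C1
  -- multiply by eps(-ρ1)^2
  have hπν : eps ρ1 * eps (-ρ1) = 1 := eps_mul_neg ρ1
  have hκν : eps ρ2 * eps (-ρ1) = eps (ρ2 - ρ1) := by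
    have h := sub_eq_add_neg ρ2 ρ1
    rw [h, eps_add]
  have hZν : FS (univ : Finset (ZMod m)) * eps (-ρ1) = FS univ := FS_univ_mul_eps _
  have hW2ν : W2q m * (eps (-ρ1) * eps (-ρ1)) = W2q m := by
    rw [← eps_add]
    exact W2q_shift hm2 _ (val_add_self_even hm2 _)
  have C3 := congrArg (fun z : QR m => z * (eps (-ρ1) * eps (-ρ1))) C1
  have C4 : (FS A * eps (-ρ1)) * (FS A * eps (-ρ1)) + FS A * eps (-ρ1)
      + (FS A * eps (-ρ1)) * eps (ρ2-ρ1) + FS univ + 1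
      + eps (ρ2-ρ1) * eps (ρ2-ρ1) + eps (ρ2-ρ1) = W2q m := by
    linear_combination C3 - (FS A * eps (-ρ1)) * hπν - (FS A * eps (-ρ1)) * hκν
      - eps (-ρ1) * hZν - hZν - (eps ρ1 * eps (-ρ1) + 1) * hπν
      - (eps ρ2 * eps (-ρ1) + eps (ρ2-ρ1)) * hκν - (eps ρ1 * eps (-ρ1)) * hκν
      - eps (ρ2-ρ1) * hπν + hW2ν
  have Ω : (FS A * eps (-ρ1) + eps (ρ2-ρ1)) * (FS A * eps (-ρ1) + eps (ρ2-ρ1))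
      + (1 + eps (ρ2-ρ1)) * (FS A * eps (-ρ1) + eps (ρ2-ρ1))
      + (1 + eps (ρ2-ρ1)) * (1 + eps (ρ2-ρ1)) = W2q m + FS univ := by
    linear_combination C4 + (FS A * eps (-ρ1) * eps (ρ2-ρ1)
      + eps (ρ2-ρ1) * eps (ρ2-ρ1) + eps (ρ2-ρ1) - FS univ) * QR_two_zero (m := m)
  -- arithmetic facts about dval
  set dval : ℕ := (ρ2 - ρ1).val with hdval
  have hdvl_even : 2 ∣ dval := by
    obtain ⟨k, hk⟩ := heven
    have hcast : ρ2 - ρ1 = ((k : ℤ) : ZMod m) + ((k : ℤ) : ZMod m) := by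
      rw [hρ2, hρ1]
      have h2 : ((r₂ - r₁ : ℤ) : ZMod m) = (r₂ : ZMod m) - (r₁ : ZMod m) := by
        push_cast
        ring
      rw [← h2, hk]
      push_cast
      ring
    rw [hdval, hcast]
    exact val_add_self_even hm2 _
  have hd0 : dval ≠ 0 := by
    rw [hdval]
    intro h
    have : ρ2 - ρ1 = 0 := (ZMod.val_eq_zero _).mp h
    exact (sub_ne_zero.mpr (hne.symm)) this
  have hdhalf : dval ≠ m / 2 := by
    intro h
    apply hhalf
    have h1 : ((dval : ℕ) : ZMod m) = ρ2 - ρ1 := val_id _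
    rw [h] at h1
    rw [show ρ2 = (ρ2 - ρ1) + ρ1 by ring, ← h1]
    ring
  have hdlt : dval < m := ZMod.val_lt _
  set v : ℕ := dval.factorization 2 with hv
  set e : ℕ := dval / 2^v with he
  have hve : 2^v * e = dval := Nat.ordProj_mul_ordCompl_eq_self dval 2
  have heodd : ¬ 2 ∣ e := Nat.not_dvd_ordCompl Nat.prime_two hd0
  have hv1 : 1 ≤ v := Nat.Prime.factorization_pos_of_dvd Nat.prime_two hd0 hdvl_even
  have hvα : v ≤ α - 2 := by
    by_contra hc
    push_neg at hc
    have h2v : 2^v ∣ dval := Nat.ordProj_dvd dval 2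
    have hdd : 2^(α-1) ∣ dval := dvd_trans (pow_dvd_pow 2 (by omega)) h2v
    obtain ⟨c, hc2⟩ := hdd
    have hps : 2^(α-1) * 2 = 2^α := by
      rw [← pow_succ]
      congr 1
      omega
    have hppos : 0 < 2^(α-1) := Nat.pow_pos (by norm_num)
    have hmval : m = 2^(α-1) * 2 := by rw [hps, hm]
    have hcne : c ≠ 0 := by
      rintro rfl
      rw [mul_zero] at hc2
      exact hd0 hc2
    have hclt : c < 2 := by
      by_contra hge
      push_neg at hge
      have := Nat.mul_le_mul_left (2^(α-1)) hge
      omega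
    have hc1' : c = 1 := by omega
    apply hdhalf
    rw [hc1', mul_one] at hc2
    omega
  -- polynomial representatives
  set Spoly : Polynomial (ZMod 2) :=
    (∑ c ∈ A, (X : Polynomial (ZMod 2))^((c + (-ρ1)).val)) + X^dval with hSpoly
  have hqmkS : qmk m Spoly = FS A * eps (-ρ1) + eps (ρ2-ρ1) := by
    rw [hSpoly, map_add, map_sum, map_pow]
    congr 1
    rw [FS, Finset.sum_mul]
    refine Finset.sum_congr rfl (fun c _ => ?_)
    rw [map_pow, ← eps_add]
    rfl
  have hqmkQ : qmk m (1 + (X : Polynomial (ZMod 2))^dval) = 1 + eps (ρ2-ρ1) := by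
    rw [map_add, map_one, map_pow]
    rfl
  set Qpoly : Polynomial (ZMod 2) := 1 + (X : Polynomial (ZMod 2))^dval with hQpoly
  have hzero : qmk m (Spoly*Spoly + Qpoly*Spoly + Qpoly*Qpoly + W2poly m + Zpoly m) = 0 := by
    simp only [map_add, map_mul]
    rw [show (qmk m) Spoly = FS A * eps (-ρ1) + eps (ρ2-ρ1) from hqmkS,
      show (qmk m) Qpoly = 1 + eps (ρ2-ρ1) from hqmkQ, qmk_W2poly, qmk_Zpoly]
    linear_combination Ω + QR_add_self (W2q m) + QR_add_self (FS (univ : Finset (ZMod m)))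
  have hdvd1 : (X : Polynomial (ZMod 2))^m - 1 ∣
      Spoly*Spoly + Qpoly*Spoly + Qpoly*Qpoly + W2poly m + Zpoly m :=
    Ideal.mem_span_singleton.mp (Ideal.Quotient.eq_zero_iff_mem.mp hzero)
  have hXm : ((X : Polynomial (ZMod 2)) + 1)^m = X^m + 1 := by
    rw [hm, pow2_add α X 1, one_pow]
  have hdvd2 : ((X : Polynomial (ZMod 2)) + 1)^m ∣
      Spoly*Spoly + Qpoly*Spoly + Qpoly*Qpoly + W2poly m + Zpoly m := by
    rw [hXm, show (X : Polynomial (ZMod 2))^m + 1 = X^m - 1 by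
      rw [sub_eq_add_neg, poly_neg_one]]
    exact hdvd1
  -- apply the substitution X ↦ X + 1
  have hdvd3 := map_dvd (Polynomial.aeval ((X : Polynomial (ZMod 2)) + 1)) hdvd2
  have hτX1 : Polynomial.aeval ((X : Polynomial (ZMod 2)) + 1)
      ((X : Polynomial (ZMod 2)) + 1) = X := by
    rw [map_add, Polynomial.aeval_X, map_one, add_assoc, one_add_one_eq_two,
      poly_two_zero, add_zero]
  have hτm : Polynomial.aeval ((X : Polynomial (ZMod 2)) + 1)
      (((X : Polynomial (ZMod 2)) + 1)^m) = X^m := by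
    rw [map_pow, hτX1]
  have hsq2 : ((X : Polynomial (ZMod 2)) + 1)^2 = X^2 + 1 := by
    have := pow2_add 1 X (1 : Polynomial (ZMod 2))
    simpa using this
  have hτW2 : Polynomial.aeval ((X : Polynomial (ZMod 2)) + 1) (W2poly m) = X^(m-2) := by
    have hg := congrArg (Polynomial.aeval ((X : Polynomial (ZMod 2)) + 1)) (geom_W2poly (m := m) hm2)
    rw [map_mul, map_sub, map_pow, Polynomial.aeval_X, map_one, map_sub, map_pow,
      Polynomial.aeval_X, map_one, hXm] at hg
    rw [show ((X : Polynomial (ZMod 2)) + 1)^2 - 1 = X^2 by rw [hsq2]; ring,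
      show (X : Polynomial (ZMod 2))^m + 1 - 1 = X^m by ring] at hg
    have hfac : (X : Polynomial (ZMod 2))^m = X^(m-2) * X^2 := by
      rw [← pow_add]
      congr 1
      omega
    rw [hfac] at hg
    exact mul_right_cancel₀ (pow_ne_zero 2 Polynomial.X_ne_zero) hg
  have hτZ : Polynomial.aeval ((X : Polynomial (ZMod 2)) + 1) (Zpoly m) = X^(m-1) := by
    have hg := congrArg (Polynomial.aeval ((X : Polynomial (ZMod 2)) + 1)) (geom_Zpoly (m := m))
    rw [map_mul, map_sub, Polynomial.aeval_X, map_one, map_sub, map_pow,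
      Polynomial.aeval_X, map_one, hXm] at hg
    rw [show ((X : Polynomial (ZMod 2)) + 1) - 1 = X by ring,
      show (X : Polynomial (ZMod 2))^m + 1 - 1 = X^m by ring] at hg
    have hfac : (X : Polynomial (ZMod 2))^m = X^(m-1) * X := by
      rw [← pow_succ]
      congr 1
      omega
    rw [hfac] at hg
    exact mul_right_cancel₀ Polynomial.X_ne_zero hg
  have hτQ : Polynomial.aeval ((X : Polynomial (ZMod 2)) + 1) Qpoly
      = 1 + ((X : Polynomial (ZMod 2)) + 1)^dval := by
    rw [hQpoly, map_add, map_one, map_pow, Polynomial.aeval_X]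
  -- factor Q
  obtain ⟨U, hUf, hU0⟩ := Tfact (2^v) (Nat.pow_pos (n := v) (by norm_num)).ne' e
  have hQfact : 1 + ((X : Polynomial (ZMod 2)) + 1)^dval = X^(2^v) * U := by
    have h1 : ((X : Polynomial (ZMod 2)) + 1)^dval = (((X : Polynomial (ZMod 2)) + 1)^(2^v))^e := by
      rw [← pow_mul, hve]
    rw [h1, pow2_add v X 1, one_pow, hUf]
    linear_combination poly_two_zero
  have hU01 : U.coeff 0 = 1 := by
    rw [hU0, show e = 2*(e/2) + 1 by omega]
    push_cast
    rw [show (2 : ZMod 2) = 0 by decide]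
    ring
  -- final contradiction
  have h2t : 2 * 2^v < m - 2 := by
    have hp1 : 2 * 2^v = 2^(v+1) := by rw [pow_succ]; ring
    have hp2 : (2:ℕ)^(v+1) ≤ 2^(α-1) := Nat.pow_le_pow_right (by norm_num) (by omega)
    have hp3 : (2:ℕ)^(α-1) * 2 = 2^α := by
      rw [← pow_succ]
      congr 1
      omega
    omega
  apply endgame m (2^v) (Polynomial.aeval ((X : Polynomial (ZMod 2)) + 1) Spoly) U hU01 h2t
  rw [hτm] at hdvd3
  simp only [map_add, map_mul] at hdvd3
  rw [hτW2, hτZ, hτQ, hQfact] at hdvd3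
  exact hdvd3
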